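/- Let D = diag(1, e^{iφ}) be a diagonal single-qubit unitary, let |ψ⟩ ∈ ℂ² be any vector, and let x ∈ {0,1}. Then the X-teleportation circuit identity holds: (⟨x| H D ⊗ I₂) · CZ · (|ψ⟩ ⊗ |+⟩) = 2^{−1/2} · H Z^x D |ψ⟩. In particular, if ‖ψ‖ = 1 then each measurement outcome x occurs with probability ‖(⟨x|HD ⊗ I₂) CZ (|ψ⟩⊗|+⟩)‖² = 1/2, and the post-measurement state of the second qubit is proportional to H Z^x D |ψ⟩. -/

import Mathlib

noncomputable section

/-- The Hadamard gate `H = (1/√2)((1,1),(1,−1))` on one qubit. -/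
def Hgate : Matrix (Fin 2) (Fin 2) ℂ :=
  (((Real.sqrt 2)⁻¹ : ℝ) : ℂ) • !![1, 1; 1, -1]

/-- The Pauli-Z gate `Z = diag(1,−1)` on one qubit. -/
def Zgate : Matrix (Fin 2) (Fin 2) ℂ := !![1, 0; 0, -1]

/-- The diagonal single-qubit unitary `D = diag(1, e^{iφ})`. -/
def Dgate (φ : ℝ) : Matrix (Fin 2) (Fin 2) ℂ :=
  !![1, 0; 0, Complex.exp (Complex.I * φ)]

/-- The controlled-Z gate `CZ = diag(1,1,1,−1)` on two qubits. -/
def CZ2 : Matrix (Fin 2 × Fin 2) (Fin 2 × Fin 2) ℂ :=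
  Matrix.diagonal fun p => if p.1 = 1 ∧ p.2 = 1 then -1 else 1

/-- The state `|+⟩ = (|0⟩ + |1⟩)/√2` on one qubit. -/
def plusState : Fin 2 → ℂ := fun _ => (((Real.sqrt 2)⁻¹ : ℝ) : ℂ)

/-- The (unnormalized) state of the second qubit after the `X`-teleportation gadget:
apply `CZ` to `|ψ⟩ ⊗ |+⟩`, then apply `⟨x| H D ⊗ I₂`, i.e. measure the first qubit
in the `D†XD` basis with outcome `x`. -/
def teleported (φ : ℝ) (ψ : Fin 2 → ℂ) (x : Fin 2) : Fin 2 → ℂ := fun j =>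
  ∑ i : Fin 2, (Hgate * Dgate φ) x i * (CZ2.mulVec fun p => ψ p.1 * plusState p.2) (i, j)

/-! Entrywise, `CZ (|ψ⟩ ⊗ |+⟩)` has `(i, j)` entry `2^{-1/2} (-1)^{ij} ψᵢ` and `⟨x|HD` has `i`-th
entry `2^{-1/2} (-1)^{xi} Dᵢᵢ`, so contracting over `i` gives `2^{-1/2} (H Z^x D ψ)ⱼ`. Since
`H Z^x D` is unitary, the outcome probability is `‖2^{-1/2}‖² ‖ψ‖² = 1/2`. -/

open Matrix

lemma sum_norm_sq_eq_star_dotProduct {𝕜 n : Type*} [RCLike 𝕜] [Fintype n] (v : n → 𝕜) :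
    ((∑ j, ‖v j‖ ^ 2 : ℝ) : 𝕜) = star v ⬝ᵥ v := by
  simp [dotProduct, RCLike.conj_mul]

lemma sum_norm_sq_mulVec_of_mem_unitaryGroup {𝕜 n : Type*} [RCLike 𝕜] [Fintype n]
    [DecidableEq n] {U : Matrix n n 𝕜} (hU : U ∈ unitaryGroup n 𝕜) (v : n → 𝕜) :
    ∑ j, ‖(U *ᵥ v) j‖ ^ 2 = ∑ j, ‖v j‖ ^ 2 := by
  have hUU : Uᴴ * U = 1 := Unitary.star_mul_self_of_mem hU
  apply RCLike.ofReal_injective (K := 𝕜)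
  rw [sum_norm_sq_eq_star_dotProduct, sum_norm_sq_eq_star_dotProduct, star_mulVec,
    ← dotProduct_mulVec, mulVec_mulVec, hUU, one_mulVec]

lemma sum_norm_sq_smul {𝕜 n : Type*} [RCLike 𝕜] [Fintype n] (c : 𝕜) (v : n → 𝕜) :
    ∑ j, ‖(c • v) j‖ ^ 2 = ‖c‖ ^ 2 * ∑ j, ‖v j‖ ^ 2 := by
  simp [Finset.mul_sum, norm_mul, mul_pow]

lemma norm_inv_sqrt_two_sq : ‖(((Real.sqrt 2)⁻¹ : ℝ) : ℂ)‖ ^ 2 = 1 / 2 := by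
  rw [Complex.norm_real, Real.norm_eq_abs, sq_abs, inv_pow, Real.sq_sqrt zero_le_two, one_div]

lemma inv_sqrt_two_mul_self : (Real.sqrt 2 : ℂ)⁻¹ * (Real.sqrt 2 : ℂ)⁻¹ = 1 / 2 := by
  rw [← mul_inv, ← Complex.ofReal_mul, Real.mul_self_sqrt zero_le_two]; norm_num

lemma Hgate_mem_unitaryGroup : Hgate ∈ unitaryGroup (Fin 2) ℂ := by
  rw [mem_unitaryGroup_iff]
  ext i j
  fin_cases i <;> fin_cases j <;> simp [Hgate, mul_apply, Fin.sum_univ_two, inv_sqrt_two_mul_self]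
  all_goals norm_num

lemma Zgate_mem_unitaryGroup : Zgate ∈ unitaryGroup (Fin 2) ℂ := by
  rw [mem_unitaryGroup_iff]
  ext i j
  fin_cases i <;> fin_cases j <;> simp [Zgate, mul_apply, Fin.sum_univ_two]

lemma Dgate_mem_unitaryGroup (φ : ℝ) : Dgate φ ∈ unitaryGroup (Fin 2) ℂ := by
  rw [mem_unitaryGroup_iff]
  have h : Complex.exp (Complex.I * φ) * starRingEnd ℂ (Complex.exp (Complex.I * φ)) = 1 := by
    rw [Complex.mul_conj, Complex.normSq_eq_norm_sq, Complex.norm_exp_I_mul_ofReal]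
    norm_num
  ext i j
  fin_cases i <;> fin_cases j <;> simp [Dgate, mul_apply, Fin.sum_univ_two, h]

lemma CZ2_mulVec_apply (v : Fin 2 × Fin 2 → ℂ) (i j : Fin 2) :
    (CZ2 *ᵥ v) (i, j) = (if i = 1 ∧ j = 1 then -1 else 1) * v (i, j) :=
  mulVec_diagonal _ _ _

lemma teleported_eq_smul_mulVec (φ : ℝ) (ψ : Fin 2 → ℂ) (x : Fin 2) :
    teleported φ ψ x =
      (((Real.sqrt 2)⁻¹ : ℝ) : ℂ) • (Hgate * Zgate ^ (x : ℕ) * Dgate φ) *ᵥ ψ := by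
  funext j
  simp only [teleported, CZ2_mulVec_apply]
  fin_cases x <;> fin_cases j <;>
    simp [Hgate, Dgate, Zgate, plusState, mul_apply, dotProduct, Fin.sum_univ_two] <;>
    ring

/-- **The `X`-teleportation circuit identity.**
For `D = diag(1, e^{iφ})`, any `|ψ⟩ ∈ ℂ²` and any outcome `x ∈ {0,1}`,
`(⟨x| H D ⊗ I₂) · CZ · (|ψ⟩ ⊗ |+⟩) = 2^{−1/2} · H Z^x D |ψ⟩`; in particular the
post-measurement state of the second qubit is proportional to `H Z^x D |ψ⟩`, and if
`‖ψ‖ = 1` then each measurement outcome `x` occurs with probability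
`‖(⟨x|HD ⊗ I₂) CZ (|ψ⟩⊗|+⟩)‖² = 1/2`. -/
theorem x_teleportation (φ : ℝ) (ψ : Fin 2 → ℂ) (x : Fin 2) :
    teleported φ ψ x =
        (((Real.sqrt 2)⁻¹ : ℝ) : ℂ) • (Hgate * Zgate ^ (x : ℕ) * Dgate φ).mulVec ψ ∧
      ((∑ i : Fin 2, ‖ψ i‖ ^ 2 = 1) →
        ∑ j : Fin 2, ‖teleported φ ψ x j‖ ^ 2 = 1 / 2) := by
  refine ⟨teleported_eq_smul_mulVec φ ψ x, fun hψ => ?_⟩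
  have hU : Hgate * Zgate ^ (x : ℕ) * Dgate φ ∈ unitaryGroup (Fin 2) ℂ :=
    mul_mem (mul_mem Hgate_mem_unitaryGroup (pow_mem Zgate_mem_unitaryGroup _))
      (Dgate_mem_unitaryGroup φ)
  rw [teleported_eq_smul_mulVec, sum_norm_sq_smul, sum_norm_sq_mulVec_of_mem_unitaryGroup hU,
    hψ, norm_inv_sqrt_two_sq, mul_one]
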